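/- arXiv:1807.09722 — 6 statements merged into one kernel-verified Lean document; each statement's English description precedes it below -/
import Mathlib

section
/- Let Φ : ℝ^d → ℝ and Ψ : ℝ^s → ℝ be even functions that are conditionally positive definite of order 1. Let x_1,…,x_n ∈ ℝ^d be pairwise distinct, y_1,…,y_n ∈ ℝ^s be pairwise distinct, and define A, B ∈ ℝ^{n×n} by A_{ij} = Φ(x_i − x_j) and B_{ij} = Ψ(y_i − y_j). Then for every nonzero matrix V ∈ ℝ^{n×n} with V𝟙 = 0 and Vᵀ𝟙 = 0 one has tr(B Vᵀ A V) > 0; that is, the Hessian −(B⊗A) of the energy E₂(X) = −tr(B Xᵀ A X) is negative definite on lin(DS). -/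
/-!
Let `P = 1 - 𝟙𝟙ᵀ/n` be the centering projection and `Ã = P A P + 𝟙𝟙ᵀ`. For any `η`,
`ηᵀ Ã η = (Pη)ᵀ A (Pη) + (∑ η)²`, and `Pη` sums to zero, so conditional positive definiteness of
order 1 makes the quadratic form of `Ã` positive definite. Since `V𝟙 = Vᵀ𝟙 = 0` gives
`PV = VP = V` and kills the `𝟙𝟙ᵀ` terms, `tr (B Vᵀ A V) = tr (B̃ Vᵀ Ã V)`. Writing the
symmetric positive definite `Ã` as `CᵀC`, this trace is `∑ₖ wₖᵀ B̃ wₖ` over the rows `wₖ` of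
`CV ≠ 0`, which is positive.
-/

open Matrix

/-- A function `Φ : ℝ^d → ℝ` is conditionally positive definite of order 1 if for every finite
collection of pairwise distinct points `x_1, …, x_n` and every nonzero vector `η` with
`∑ i, η i = 0`, one has `∑ i j, η i * η j * Φ (x i - x j) > 0`. -/
def CondPosDefOrder1 {d : ℕ} (Φ : (Fin d → ℝ) → ℝ) : Prop :=
  ∀ (n : ℕ) (x : Fin n → (Fin d → ℝ)), Function.Injective x →
    ∀ η : Fin n → ℝ, η ≠ 0 → (∑ i, η i) = 0 →
      0 < ∑ i, ∑ j, η i * η j * Φ (x i - x j)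

namespace Matrix

section Trace

variable {ι κ : Type*} [Fintype ι] [Fintype κ]

theorem trace_mul_mul_transpose (W : Matrix κ ι ℝ) (N : Matrix ι ι ℝ) :
    (W * N * Wᵀ).trace = ∑ k, W k ⬝ᵥ N *ᵥ W k := by
  simp only [trace, diag, mul_apply, transpose_apply, dotProduct, mulVec, Finset.sum_mul,
    Finset.mul_sum]
  refine Finset.sum_congr rfl fun k _ => Finset.sum_comm.trans ?_
  exact Finset.sum_congr rfl fun i _ => Finset.sum_congr rfl fun j _ => by ring

theorem trace_mul_mul_transpose_pos {W : Matrix κ ι ℝ} {N : Matrix ι ι ℝ}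
    (hN : ∀ v ≠ 0, 0 < v ⬝ᵥ N *ᵥ v) (hW : W ≠ 0) : 0 < (W * N * Wᵀ).trace := by
  obtain ⟨k, hk⟩ : ∃ k, W k ≠ 0 := by
    by_contra! h
    exact hW (funext h)
  have hN_nonneg : ∀ v, 0 ≤ v ⬝ᵥ N *ᵥ v := fun v => by
    rcases eq_or_ne v 0 with rfl | hv
    · simp
    · exact (hN v hv).le
  rw [trace_mul_mul_transpose]
  exact Finset.sum_pos' (fun k _ => hN_nonneg (W k)) ⟨k, Finset.mem_univ k, hN _ hk⟩

open scoped MatrixOrder in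
theorem trace_mul_transpose_mul_mul_pos [DecidableEq κ] {M : Matrix κ κ ℝ}
    {N : Matrix ι ι ℝ} {V : Matrix κ ι ℝ} (hM : M.PosDef) (hN : ∀ v ≠ 0, 0 < v ⬝ᵥ N *ᵥ v)
    (hV : V ≠ 0) : 0 < (N * Vᵀ * M * V).trace := by
  obtain ⟨C, rfl⟩ := CStarAlgebra.nonneg_iff_eq_star_mul_self.mp hM.posSemidef.nonneg
  have hCV : C * V ≠ 0 := fun h => hV <| calc
    V = (star C * C)⁻¹ * (star C * C * V) :=
      (nonsing_inv_mul_cancel_left _ V ((isUnit_iff_isUnit_det _).mp hM.isUnit)).symm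
    _ = 0 := by rw [Matrix.mul_assoc, h, Matrix.mul_zero, Matrix.mul_zero]
  have key : (N * Vᵀ * (star C * C) * V).trace = (C * V * N * (C * V)ᵀ).trace := by
    rw [transpose_mul, star_eq_conjTranspose, conjTranspose_eq_transpose_of_trivial]
    simp only [← Matrix.mul_assoc]
    rw [trace_mul_cycle, ← Matrix.mul_assoc, ← Matrix.mul_assoc, trace_mul_cycle]
    simp only [Matrix.mul_assoc]
  rw [key]
  exact trace_mul_mul_transpose_pos hN hCV

end Trace

section Centering

variable {ι : Type*} [Fintype ι] [DecidableEq ι]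

local notation "𝟙" => (of fun _ _ => (1 : ℝ) : Matrix ι ι ℝ)

variable (ι) in
noncomputable def centeringMatrix : Matrix ι ι ℝ := 1 - (Fintype.card ι : ℝ)⁻¹ • 𝟙

noncomputable def centeredAddOnes (A : Matrix ι ι ℝ) : Matrix ι ι ℝ :=
  centeringMatrix ι * A * centeringMatrix ι + 𝟙

omit [DecidableEq ι] in
theorem ones_mulVec (η : ι → ℝ) : 𝟙 *ᵥ η = fun _ => ∑ i, η i := by
  ext; simp [mulVec, dotProduct]

omit [DecidableEq ι] in
theorem ones_mul_eq_zero {m : Type*} {V : Matrix ι m ℝ} (h : Vᵀ *ᵥ (fun _ => 1) = 0) :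
    𝟙 * V = 0 := by
  ext i j; simpa [mul_apply, mulVec, dotProduct] using congrFun h j

omit [DecidableEq ι] in
theorem mul_ones_eq_zero {m : Type*} [Fintype m] {V : Matrix m ι ℝ} (h : V *ᵥ (fun _ => 1) = 0) :
    V * 𝟙 = 0 := by
  ext i j; simpa [mul_apply, mulVec, dotProduct] using congrFun h i

theorem centeringMatrix_transpose : (centeringMatrix ι)ᵀ = centeringMatrix ι := by
  rw [centeringMatrix, transpose_sub, transpose_one, transpose_smul]; rfl

theorem centeringMatrix_mulVec (η : ι → ℝ) :
    centeringMatrix ι *ᵥ η = fun i => η i - (Fintype.card ι : ℝ)⁻¹ * ∑ j, η j := by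
  rw [centeringMatrix, sub_mulVec, smul_mulVec, ones_mulVec, one_mulVec]; rfl

theorem sum_centeringMatrix_mulVec (η : ι → ℝ) : ∑ i, (centeringMatrix ι *ᵥ η) i = 0 := by
  rcases isEmpty_or_nonempty ι with _ | _
  · simp
  · simp [centeringMatrix_mulVec, Finset.sum_sub_distrib]

theorem centeringMatrix_mulVec_of_sum_eq_zero {η : ι → ℝ} (h : ∑ i, η i = 0) :
    centeringMatrix ι *ᵥ η = η := by
  simp [centeringMatrix_mulVec, h]

theorem centeringMatrix_mul_of_ones_mul {m : Type*} {V : Matrix ι m ℝ} (h : 𝟙 * V = 0) :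
    centeringMatrix ι * V = V := by
  rw [centeringMatrix, Matrix.sub_mul, Matrix.one_mul, Matrix.smul_mul, h, smul_zero, sub_zero]

theorem mul_centeringMatrix_of_mul_ones {m : Type*} [Fintype m] {V : Matrix m ι ℝ}
    (h : V * 𝟙 = 0) : V * centeringMatrix ι = V := by
  rw [centeringMatrix, Matrix.mul_sub, Matrix.mul_one, Matrix.mul_smul, h, smul_zero, sub_zero]

theorem dotProduct_centeredAddOnes_mulVec (A : Matrix ι ι ℝ) (η : ι → ℝ) :
    η ⬝ᵥ centeredAddOnes A *ᵥ η =
      centeringMatrix ι *ᵥ η ⬝ᵥ A *ᵥ centeringMatrix ι *ᵥ η + (∑ i, η i) ^ 2 := by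
  rw [centeredAddOnes, add_mulVec, dotProduct_add, ← mulVec_mulVec, ← mulVec_mulVec,
    dotProduct_mulVec η, ← mulVec_transpose, centeringMatrix_transpose, ones_mulVec]
  simp [dotProduct, ← Finset.sum_mul, sq]

theorem dotProduct_centeredAddOnes_mulVec_pos {A : Matrix ι ι ℝ}
    (hA : ∀ η ≠ 0, ∑ i, η i = 0 → 0 < η ⬝ᵥ A *ᵥ η) {η : ι → ℝ} (hη : η ≠ 0) :
    0 < η ⬝ᵥ centeredAddOnes A *ᵥ η := by
  rw [dotProduct_centeredAddOnes_mulVec]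
  by_cases hsum : ∑ i, η i = 0
  · rw [centeringMatrix_mulVec_of_sum_eq_zero hsum, hsum]
    simpa using hA η hη hsum
  · have hnonneg : 0 ≤ centeringMatrix ι *ᵥ η ⬝ᵥ A *ᵥ centeringMatrix ι *ᵥ η := by
      rcases eq_or_ne (centeringMatrix ι *ᵥ η) 0 with h | h
      · simp [h]
      · exact (hA _ h (sum_centeringMatrix_mulVec η)).le
    positivity

theorem posDef_centeredAddOnes {A : Matrix ι ι ℝ} (hA_symm : Aᵀ = A)
    (hA : ∀ η ≠ 0, ∑ i, η i = 0 → 0 < η ⬝ᵥ A *ᵥ η) : (centeredAddOnes A).PosDef := by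
  refine .of_dotProduct_mulVec_pos ?_ fun η hη => by
    simpa using dotProduct_centeredAddOnes_mulVec_pos hA hη
  rw [IsHermitian, conjTranspose_eq_transpose_of_trivial, centeredAddOnes, transpose_add,
    transpose_mul, transpose_mul, centeringMatrix_transpose, hA_symm, Matrix.mul_assoc]
  rfl

theorem trace_centeredAddOnes_mul_transpose_mul_centeredAddOnes_mul (A B : Matrix ι ι ℝ)
    {V : Matrix ι ι ℝ} (h_ones_mul : 𝟙 * V = 0) (h_mul_ones : V * 𝟙 = 0) :
    (centeredAddOnes B * Vᵀ * centeredAddOnes A * V).trace = (B * Vᵀ * A * V).trace := by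
  have hPV := centeringMatrix_mul_of_ones_mul h_ones_mul
  have hVP := mul_centeringMatrix_of_mul_ones h_mul_ones
  have hVtP : Vᵀ * centeringMatrix ι = Vᵀ := by
    rw [← centeringMatrix_transpose, ← transpose_mul, hPV]
  have hPVt : centeringMatrix ι * Vᵀ = Vᵀ := by
    rw [← centeringMatrix_transpose, ← transpose_mul, hVP]
  have hVAV : Vᵀ * centeredAddOnes A * V = Vᵀ * A * V := by
    rw [centeredAddOnes, Matrix.mul_add, Matrix.add_mul, Matrix.mul_assoc _ 𝟙, h_ones_mul,
      Matrix.mul_zero, add_zero, ← Matrix.mul_assoc, ← Matrix.mul_assoc, hVtP,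
      Matrix.mul_assoc _ _ V, hPV]
  have hVB : V * centeredAddOnes B = V * B * centeringMatrix ι := by
    rw [centeredAddOnes, Matrix.mul_add, h_mul_ones, add_zero, ← Matrix.mul_assoc,
      ← Matrix.mul_assoc, hVP]
  calc (centeredAddOnes B * Vᵀ * centeredAddOnes A * V).trace
      = (centeredAddOnes B * (Vᵀ * A * V)).trace := by
        rw [← hVAV]; simp only [Matrix.mul_assoc]
    _ = (Vᵀ * A * V * B * centeringMatrix ι).trace := by
        rw [trace_mul_comm, Matrix.mul_assoc _ V, hVB]; simp only [Matrix.mul_assoc]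
    _ = (B * Vᵀ * A * V).trace := by
        rw [trace_mul_comm]
        simp only [← Matrix.mul_assoc, hPVt]
        rw [trace_mul_comm]
        simp only [Matrix.mul_assoc]

end Centering

theorem transpose_of_apply_sub {ι G : Type*} [AddGroup G] {Φ : G → ℝ}
    (hΦ : ∀ v, Φ (-v) = Φ v) (x : ι → G) :
    (of fun i j => Φ (x i - x j))ᵀ = of fun i j => Φ (x i - x j) := by
  ext i j
  rw [transpose_apply, of_apply, of_apply, ← hΦ, neg_sub]

end Matrix

theorem CondPosDefOrder1.dotProduct_mulVec_pos {d n : ℕ} {Φ : (Fin d → ℝ) → ℝ}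
    (hΦ : CondPosDefOrder1 Φ) {x : Fin n → Fin d → ℝ} (hx : Function.Injective x)
    {η : Fin n → ℝ} (hη : η ≠ 0) (hsum : ∑ i, η i = 0) :
    0 < η ⬝ᵥ (of fun i j => Φ (x i - x j)) *ᵥ η := by
  convert hΦ n x hx η hη hsum using 1
  simp only [dotProduct, mulVec, of_apply, Finset.mul_sum]
  exact Finset.sum_congr rfl fun i _ => Finset.sum_congr rfl fun j _ => by ring

theorem conditionally_concave_of_condPosDef_general
    {d s n : ℕ} (Φ : (Fin d → ℝ) → ℝ) (Ψ : (Fin s → ℝ) → ℝ)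
    (hΦeven : ∀ v, Φ (-v) = Φ v)
    (hΦ : CondPosDefOrder1 Φ) (hΨ : CondPosDefOrder1 Ψ)
    (x : Fin n → (Fin d → ℝ)) (hx : Function.Injective x)
    (y : Fin n → (Fin s → ℝ)) (hy : Function.Injective y)
    (A B : Matrix (Fin n) (Fin n) ℝ)
    (hA : ∀ i j, A i j = Φ (x i - x j)) (hB : ∀ i j, B i j = Ψ (y i - y j))
    (V : Matrix (Fin n) (Fin n) ℝ) (hV : V ≠ 0)
    (hV1 : V *ᵥ (fun _ => 1) = 0) (hV2 : Vᵀ *ᵥ (fun _ => 1) = 0) :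
    0 < (B * Vᵀ * A * V).trace := by
  obtain rfl : A = of fun i j => Φ (x i - x j) := Matrix.ext hA
  obtain rfl : B = of fun i j => Ψ (y i - y j) := Matrix.ext hB
  rw [← trace_centeredAddOnes_mul_transpose_mul_centeredAddOnes_mul _ _
    (ones_mul_eq_zero hV2) (mul_ones_eq_zero hV1)]
  exact trace_mul_transpose_mul_mul_pos
    (posDef_centeredAddOnes (transpose_of_apply_sub hΦeven x) fun _ => hΦ.dotProduct_mulVec_pos hx)
    (fun _ => dotProduct_centeredAddOnes_mulVec_pos fun _ => hΨ.dotProduct_mulVec_pos hy) hV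

/-- If `Φ, Ψ` are even, conditionally positive definite functions of order 1, and
`A i j = Φ (x i - x j)`, `B i j = Ψ (y i - y j)` for pairwise distinct points `x i` and
pairwise distinct points `y i`, then for every nonzero `V` with `V𝟙 = 0` and `Vᵀ𝟙 = 0` one has
`tr (B Vᵀ A V) > 0`; i.e. the Hessian `-(B ⊗ A)` of `E₂(X) = -tr (B Xᵀ A X)` is negative
definite on `lin(DS)`. -/
theorem conditionally_concave_of_condPosDef
    {d s n : ℕ} (Φ : (Fin d → ℝ) → ℝ) (Ψ : (Fin s → ℝ) → ℝ)
    (hΦeven : ∀ v, Φ (-v) = Φ v) (hΨeven : ∀ v, Ψ (-v) = Ψ v)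
    (hΦ : CondPosDefOrder1 Φ) (hΨ : CondPosDefOrder1 Ψ)
    (x : Fin n → (Fin d → ℝ)) (hx : Function.Injective x)
    (y : Fin n → (Fin s → ℝ)) (hy : Function.Injective y)
    (A B : Matrix (Fin n) (Fin n) ℝ)
    (hA : ∀ i j, A i j = Φ (x i - x j)) (hB : ∀ i j, B i j = Ψ (y i - y j))
    (V : Matrix (Fin n) (Fin n) ℝ) (hV : V ≠ 0)
    (hV1 : V *ᵥ (fun _ => 1) = 0) (hV2 : Vᵀ *ᵥ (fun _ => 1) = 0) :
    0 < (B * Vᵀ * A * V).trace :=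
  conditionally_concave_of_condPosDef_general Φ Ψ hΦeven hΦ hΨ x hx y hy A B hA hB V hV hV1 hV2
end

section
/- Let x_1,…,x_n ∈ ℝ^d be pairwise distinct points and y_1,…,y_n ∈ ℝ^s be pairwise distinct points, and let A, B ∈ ℝ^{n×n} be the Euclidean distance matrices A_{ij} = ‖x_i − x_j‖₂ and B_{ij} = ‖y_i − y_j‖₂. Then the set of global minimizers of E₂(X) = −tr(B Xᵀ A X) over the doubly stochastic matrices DS equals the set of global minimizers of E₂ over the permutation matrices Π_n; in particular min_{X∈DS} E₂(X) = min_{X∈Π_n} E₂(X) and every global minimizer over DS is a permutation matrix. -/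
/-!
`E₂` is strictly concave on `DS`. For `X ≠ Y` in `DS` the difference `Z = X - Y` has zero row and
column sums, and `E₂` is strictly concave along `Z` because `tr (B Zᵀ A Z) > 0`: a Euclidean
distance matrix is negative definite on `𝟙ᗮ`, so after double centering (and adding `𝟙 𝟙ᵀ`) `-A`
and `-B` become positive definite, and `tr (B Zᵀ A Z)` is the quadratic form of their Kronecker
product at `vec Z`. A strictly concave function attains its minimum over `DS = conv Π_n`
(Birkhoff) only at extreme points, i.e. at permutation matrices, and by the minimum principle its
minimum over `DS` is its minimum over `Π_n`.

Negative definiteness of `‖xᵢ - xⱼ‖` on `𝟙ᗮ` reduces to dimension one by averaging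
`|⟪w, xᵢ - xⱼ⟫|` over `w` in the unit ball, which gives `‖xᵢ - xⱼ‖` up to a positive factor. In
dimension one, `∑ cᵢ cⱼ |aᵢ - aⱼ| = -2 ∫ (∑_{aᵢ ≥ t} cᵢ)² dt` when `∑ cᵢ = 0`.
-/

open Matrix
open scoped Kronecker

theorem IsMinOn.csInf_image_eq {α β : Type*} [ConditionallyCompleteLattice β] {f : α → β}
    {s : Set α} {x : α} (hmin : IsMinOn f s x) (hx : x ∈ s) : sInf (f '' s) = f x :=
  IsLeast.csInf_eq ⟨⟨x, hx, rfl⟩, by rintro _ ⟨y, hy, rfl⟩; exact hmin hy⟩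

section ConcaveMinimum

variable {E : Type*} [AddCommGroup E] [Module ℝ E] {s : Set E} {f : E → ℝ} {x : E}

theorem StrictConcaveOn.mem_extremePoints_of_isMinOn (hf : StrictConcaveOn ℝ s f) (hx : x ∈ s)
    (hmin : IsMinOn f s x) : x ∈ s.extremePoints ℝ := by
  refine ⟨hx, fun y hy z hz hxyz => ?_⟩
  by_cases hyz : y = z
  · subst hyz
    rw [openSegment_same] at hxyz
    exact hxyz.symm
  obtain ⟨a, b, ha, hb, hab, rfl⟩ := hxyz
  have hlt := hf.2 hy hz hyz ha hb hab
  have hy' := isMinOn_iff.mp hmin y hy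
  have hz' := isMinOn_iff.mp hmin z hz
  have hle := add_le_add (mul_le_mul_of_nonneg_left hy' ha.le) (mul_le_mul_of_nonneg_left hz' hb.le)
  rw [← add_mul, hab, one_mul] at hle
  simp only [smul_eq_mul] at hlt
  linarith

theorem StrictConcaveOn.mem_of_isMinOn_convexHull (hf : StrictConcaveOn ℝ (convexHull ℝ s) f)
    (hx : x ∈ convexHull ℝ s) (hmin : IsMinOn f (convexHull ℝ s) x) : x ∈ s :=
  extremePoints_convexHull_subset (hf.mem_extremePoints_of_isMinOn hx hmin)

theorem ConcaveOn.isMinOn_convexHull (hf : ConcaveOn ℝ (convexHull ℝ s) f)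
    (hmin : IsMinOn f s x) : IsMinOn f (convexHull ℝ s) x := fun _ hy =>
  let ⟨_, hz, hzy⟩ := hf.exists_le_of_mem_convexHull (subset_convexHull ℝ s) hy
  (hmin hz).trans hzy

theorem StrictConcaveOn.setOf_isMinOn_convexHull (hf : StrictConcaveOn ℝ (convexHull ℝ s) f) :
    {x ∈ convexHull ℝ s | IsMinOn f (convexHull ℝ s) x} = {x ∈ s | IsMinOn f s x} := by
  ext x
  exact ⟨fun ⟨hx, hmin⟩ => ⟨hf.mem_of_isMinOn_convexHull hx hmin,
      hmin.on_subset (subset_convexHull ℝ s)⟩,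
    fun ⟨hx, hmin⟩ => ⟨subset_convexHull ℝ s hx, hf.concaveOn.isMinOn_convexHull hmin⟩⟩

theorem ConcaveOn.sInf_image_convexHull (hf : ConcaveOn ℝ (convexHull ℝ s) f) (hs : s.Finite)
    (hs' : s.Nonempty) : sInf (f '' convexHull ℝ s) = sInf (f '' s) := by
  obtain ⟨x, hx, hmin⟩ := s.exists_min_image f hs hs'
  rw [(isMinOn_iff.mpr hmin).csInf_image_eq hx,
    (hf.isMinOn_convexHull (isMinOn_iff.mpr hmin)).csInf_image_eq (subset_convexHull ℝ s hx)]

end ConcaveMinimum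

section OneDim

open MeasureTheory intervalIntegral Set

variable {ι : Type*} [Fintype ι]

lemma integral_indicator_Iic_one {m M b : ℝ} (hb : b ∈ Icc m M) :
    ∫ t in m..M, (Iic b).indicator (1 : ℝ → ℝ) t = b - m := by
  rw [show Iic b = {t | t ≤ b} from rfl, integral_indicator hb]
  simp

lemma intervalIntegrable_indicator_Iic_one (b m M : ℝ) :
    IntervalIntegrable ((Iic b).indicator (1 : ℝ → ℝ)) volume m M :=
  ⟨intervalIntegrable_const.1.indicator measurableSet_Iic,
    intervalIntegrable_const.2.indicator measurableSet_Iic⟩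

lemma intervalIntegrable_sum_mul_indicator_Iic (b d : ι → ℝ) (m M : ℝ) :
    IntervalIntegrable (fun t => ∑ k, d k * (Iic (b k)).indicator (1 : ℝ → ℝ) t) volume m M := by
  simpa only [Finset.sum_fn] using IntervalIntegrable.sum Finset.univ
    (f := fun k t => d k * (Iic (b k)).indicator 1 t)
    fun k _ => (intervalIntegrable_indicator_Iic_one (b k) m M).const_mul (d k)

lemma sum_mul_indicator_Iic_sq (a c : ι → ℝ) (t : ℝ) :
    (∑ i, c i * (Iic (a i)).indicator 1 t) ^ 2
      = ∑ i, ∑ j, c i * c j * (Iic (min (a i) (a j))).indicator (1 : ℝ → ℝ) t := by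
  rw [sq, Finset.sum_mul_sum]
  simp only [← Iic_inter_Iic, inter_indicator_one, Pi.mul_apply]
  refine Finset.sum_congr rfl fun i _ => Finset.sum_congr rfl fun j _ => by ring

theorem sum_mul_abs_sub_eq_neg_two_mul_integral {a c : ι → ℝ} (hc : ∑ i, c i = 0) {m M : ℝ}
    (ha : ∀ i, a i ∈ Icc m M) :
    ∑ i, ∑ j, c i * c j * |a i - a j|
      = -2 * ∫ t in m..M, (∑ i, c i * (Iic (a i)).indicator 1 t) ^ 2 := by
  have hint : ∫ t in m..M, (∑ i, c i * (Iic (a i)).indicator 1 t) ^ 2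
      = ∑ i, ∑ j, c i * c j * (min (a i) (a j) - m) := by
    simp only [sum_mul_indicator_Iic_sq]
    rw [integral_finsetSum fun i _ => intervalIntegrable_sum_mul_indicator_Iic _ _ m M]
    refine Finset.sum_congr rfl fun i _ => ?_
    rw [integral_finsetSum fun j _ => (intervalIntegrable_indicator_Iic_one _ m M).const_mul _]
    refine Finset.sum_congr rfl fun j _ => ?_
    rw [intervalIntegral.integral_const_mul, integral_indicator_Iic_one
      ⟨le_min (ha i).1 (ha j).1, (min_le_left _ _).trans (ha i).2⟩]
  -- `|x - y| = x + y - 2 min x y`, and the terms linear in `x` or `y` cancel since `∑ c = 0`.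
  have habs : ∀ i j, c i * c j * |a i - a j| = -2 * (c i * c j * (min (a i) (a j) - m))
      + c i * (a i - m) * c j + c i * (c j * (a j - m)) := by
    intro i j
    rw [abs_sub_comm, ← max_sub_min_eq_abs]
    linear_combination c i * c j * min_add_max (a i) (a j)
  simp only [habs, Finset.sum_add_distrib, ← Finset.mul_sum, ← Finset.sum_mul, hc, hint]
  ring

lemma intervalIntegrable_sum_mul_indicator_Iic_sq (a c : ι → ℝ) (m M : ℝ) :
    IntervalIntegrable (fun t => (∑ i, c i * (Iic (a i)).indicator 1 t) ^ 2) volume m M := by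
  simp only [sum_mul_indicator_Iic_sq, ← Fintype.sum_prod_type']
  exact intervalIntegrable_sum_mul_indicator_Iic _ _ m M

lemma exists_sum_mul_indicator_Iic_eq_on_Ioo {a c : ι → ℝ} (ha : Function.Injective a)
    (hc : ∑ i, c i = 0) (hc0 : c ≠ 0) :
    ∃ i j, a j < a i ∧ c i ≠ 0 ∧
      ∀ t ∈ Ioo (a j) (a i), ∑ k, c k * (Iic (a k)).indicator 1 t = c i := by
  classical
  set s := Finset.univ.filter fun i => c i ≠ 0
  have hmem {k : ι} : k ∈ s ↔ c k ≠ 0 := by simp [s]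
  obtain ⟨i, his, himax⟩ := s.exists_max_image a
    (let ⟨k, hk⟩ := Function.ne_iff.mp hc0; ⟨k, hmem.mpr hk⟩)
  have hci : c i ≠ 0 := hmem.mp his
  -- `c i` alone cannot sum to zero, so some other `c j` is nonzero.
  have hs' : (s.erase i).Nonempty := by
    by_contra hempty
    refine hci (hc ▸ (Finset.sum_eq_single i (fun k _ hki => ?_) (by simp)).symm)
    by_contra hck
    exact hempty ⟨k, Finset.mem_erase.mpr ⟨hki, hmem.mpr hck⟩⟩
  obtain ⟨j, hjs, hjmax⟩ := (s.erase i).exists_max_image a hs'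
  have hji := Finset.ne_of_mem_erase hjs
  refine ⟨i, j, (himax j (Finset.mem_of_mem_erase hjs)).lt_of_ne (ha.ne hji), hci,
    fun t ht => ?_⟩
  rw [Finset.sum_eq_single i _ (by simp)]
  · simp [indicator_of_mem (mem_Iic.mpr ht.2.le)]
  · intro k _ hki
    by_cases hck : c k = 0
    · simp [hck]
    · have hkj : a k ≤ a j := hjmax k (Finset.mem_erase.mpr ⟨hki, hmem.mpr hck⟩)
      simp [indicator_of_notMem (notMem_Iic.mpr (hkj.trans_lt ht.1))]

theorem sum_mul_abs_sub_neg {a c : ι → ℝ} (ha : Function.Injective a) (hc : ∑ i, c i = 0)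
    (hc0 : c ≠ 0) : ∑ i, ∑ j, c i * c j * |a i - a j| < 0 := by
  set M := ∑ i, |a i|
  have hmem (i : ι) : a i ∈ Icc (-M) M :=
    abs_le.mp (Finset.single_le_sum (fun j _ => abs_nonneg (a j)) (Finset.mem_univ i))
  rw [sum_mul_abs_sub_eq_neg_two_mul_integral hc hmem]
  obtain ⟨i, j, hji, hci, hconst⟩ := exists_sum_mul_indicator_Iic_eq_on_Ioo ha hc hc0
  have hpos : 0 < ∫ t in -M..M, (∑ k, c k * (Iic (a k)).indicator 1 t) ^ 2 := calc
    0 < ∫ t in a j..a i, (∑ k, c k * (Iic (a k)).indicator 1 t) ^ 2 :=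
      intervalIntegral_pos_of_pos_on (intervalIntegrable_sum_mul_indicator_Iic_sq a c _ _)
        (fun t ht => by rw [hconst t ht]; positivity) hji
    _ ≤ ∫ t in -M..M, (∑ k, c k * (Iic (a k)).indicator 1 t) ^ 2 :=
      integral_mono_interval (hmem j).1 hji.le (hmem i).2
        (Filter.Eventually.of_forall fun t => sq_nonneg _)
        (intervalIntegrable_sum_mul_indicator_Iic_sq a c _ _)
  linarith

end OneDim

open MeasureTheory in
lemma integral_neg_of_ae_neg {α : Type*} [MeasurableSpace α] {μ : Measure α} (hμ : μ ≠ 0)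
    {f : α → ℝ} (hfi : Integrable f μ) (hf : ∀ᵐ x ∂μ, f x < 0) : ∫ x, f x ∂μ < 0 := by
  have hsupp : 0 < μ (Function.support f) := by
    refine pos_iff_ne_zero.mpr fun h0 => ?_
    have := ae_neBot.mpr hμ
    obtain ⟨x, hx, hx0⟩ := (hf.and (measure_eq_zero_iff_ae_notMem.mp h0)).exists
    exact hx0 (Function.mem_support.mpr hx.ne)
  have hpos := (integral_pos_iff_support_of_nonneg_ae (hf.mono fun x hx => (neg_pos.mpr hx).le)
    hfi.neg).mpr (by rwa [← Pi.neg_def, Function.support_neg])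
  rw [integral_neg] at hpos
  linarith

section UnitBall

open MeasureTheory Metric RealInnerProductSpace

variable {E : Type*} [NormedAddCommGroup E] [InnerProductSpace ℝ E] [FiniteDimensional ℝ E]

section Measurable

variable [MeasurableSpace E] [BorelSpace E]

lemma integrable_abs_inner_unitBall (u : E) :
    Integrable (fun w => |⟪w, u⟫|) (volume.restrict (ball (0 : E) 1)) :=
  ((continuous_id.inner continuous_const).abs.continuousOn.integrableOn_compact
    (isCompact_closedBall 0 1)).mono_set ball_subset_closedBall

lemma integral_abs_inner_unitBall_eq_of_norm_eq {u v : E} (h : ‖u‖ = ‖v‖) :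
    ∫ w in ball (0 : E) 1, |⟪w, u⟫| = ∫ w in ball (0 : E) 1, |⟪w, v⟫| := by
  set R := (ℝ ∙ (u - v))ᗮ.reflection
  have hball : R ⁻¹' ball 0 1 = ball 0 1 := by
    rw [LinearIsometryEquiv.preimage_ball, map_zero]
  have hR : MeasurePreserving R (volume.restrict (ball 0 1)) (volume.restrict (ball 0 1)) := by
    simpa only [hball] using
      R.measurePreserving.restrict_preimage (measurableSet_ball (x := (0 : E)) (ε := 1))
  have hRu : R u = v := Submodule.reflection_sub h
  calc ∫ w in ball (0 : E) 1, |⟪w, u⟫| = ∫ w in ball (0 : E) 1, |⟪R w, v⟫| := by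
        simp_rw [← hRu, LinearIsometryEquiv.inner_map_map]
    _ = ∫ w in ball (0 : E) 1, |⟪w, v⟫| :=
        hR.integral_comp R.toHomeomorph.measurableEmbedding fun w => |⟪w, v⟫|

lemma norm_mul_integral_abs_inner_unitBall_comm (u v : E) :
    ‖v‖ * ∫ w in ball (0 : E) 1, |⟪w, u⟫| = ‖u‖ * ∫ w in ball (0 : E) 1, |⟪w, v⟫| := by
  rcases eq_or_ne v 0 with rfl | hv
  · simp
  have hnorm : ‖u‖ = ‖(‖u‖ / ‖v‖) • v‖ := by
    rw [norm_smul, Real.norm_of_nonneg (by positivity), div_mul_cancel₀ _ (norm_ne_zero_iff.mpr hv)]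
  rw [integral_abs_inner_unitBall_eq_of_norm_eq hnorm]
  simp_rw [inner_smul_right, abs_mul, abs_of_nonneg (by positivity : 0 ≤ ‖u‖ / ‖v‖)]
  rw [integral_const_mul]
  field_simp

lemma integral_abs_inner_unitBall_pos {v : E} (hv : v ≠ 0) :
    0 < ∫ w in ball (0 : E) 1, |⟪w, v⟫| := by
  have hopen : IsOpen (Function.support fun w : E => |⟪w, v⟫|) :=
    isOpen_ne_fun (continuous_id.inner continuous_const).abs continuous_const
  have hw : (2 * ‖v‖)⁻¹ • v ∈ Function.support (fun w : E => |⟪w, v⟫|) ∩ ball 0 1 := by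
    have hv' : 0 < ‖v‖ := norm_pos_iff.mpr hv
    refine ⟨?_, ?_⟩
    · simp [inner_smul_left, hv]
    · rw [mem_ball_zero_iff, norm_smul, norm_inv, norm_mul, Real.norm_two, norm_norm]
      field_simp
      norm_num
  rw [integral_pos_iff_support_of_nonneg (fun w => abs_nonneg _) (integrable_abs_inner_unitBall v),
    Measure.restrict_apply' measurableSet_ball]
  exact (hopen.inter isOpen_ball).measure_pos volume ⟨_, hw⟩

lemma ae_injective_inner {ι : Type*} [Finite ι] {p : ι → E} (hp : Function.Injective p) :
    ∀ᵐ w, Function.Injective fun i => ⟪w, p i⟫ := by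
  have hpair (i j : ι) : ∀ᵐ w : E, ⟪w, p i⟫ = ⟪w, p j⟫ → i = j := by
    rcases eq_or_ne i j with rfl | hij
    · exact .of_forall fun _ _ => rfl
    have hv : p i - p j ≠ 0 := sub_ne_zero.mpr (hp.ne hij)
    -- `w` fails only on the hyperplane orthogonal to `p i - p j`, a proper subspace.
    have hproper : (ℝ ∙ (p i - p j))ᗮ ≠ ⊤ := fun htop => hv <| inner_self_eq_zero.mp <|
      Submodule.mem_orthogonal_singleton_iff_inner_right.mp (htop ▸ Submodule.mem_top)
    refine measure_mono_null (fun w hw => ?_) (Measure.addHaar_submodule volume _ hproper)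
    rw [SetLike.mem_coe, Submodule.mem_orthogonal_singleton_iff_inner_left, inner_sub_right,
      (Classical.not_imp.mp hw).1, sub_self]
  filter_upwards [ae_all_iff.mpr fun i => ae_all_iff.mpr (hpair i)] with w hw i j using hw i j

end Measurable

theorem sum_mul_norm_sub_neg {ι : Type*} [Fintype ι] {p : ι → E} (hp : Function.Injective p)
    {c : ι → ℝ} (hc : ∑ i, c i = 0) (hc0 : c ≠ 0) :
    ∑ i, ∑ j, c i * c j * ‖p i - p j‖ < 0 := by
  borelize E
  obtain ⟨i, hi⟩ : ∃ i, c i ≠ 0 := Function.ne_iff.mp hc0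
  obtain ⟨j, hji⟩ : ∃ j, j ≠ i := by
    by_contra! h
    exact hi (by rw [← hc, Fintype.sum_eq_single i fun j hj => absurd (h j) hj])
  have hv : p j - p i ≠ 0 := sub_ne_zero.mpr (hp.ne hji)
  have hint (k l : ι) : Integrable (fun w => c k * c l * |⟪w, p k - p l⟫|)
      (volume.restrict (ball (0 : E) 1)) :=
    (integrable_abs_inner_unitBall _).const_mul _
  have havg : ‖p j - p i‖ * ∫ w in ball (0 : E) 1, ∑ k, ∑ l, c k * c l * |⟪w, p k - p l⟫|
      = (∫ w in ball (0 : E) 1, |⟪w, p j - p i⟫|) * ∑ k, ∑ l, c k * c l * ‖p k - p l‖ := by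
    rw [integral_finsetSum _ fun k _ => integrable_finsetSum _ fun l _ => hint k l,
      Finset.mul_sum, Finset.mul_sum]
    refine Finset.sum_congr rfl fun k _ => ?_
    rw [integral_finsetSum _ fun l _ => hint k l, Finset.mul_sum, Finset.mul_sum]
    refine Finset.sum_congr rfl fun l _ => ?_
    rw [integral_const_mul, mul_left_comm, norm_mul_integral_abs_inner_unitBall_comm]
    ring
  have hneg : ∫ w in ball (0 : E) 1, ∑ k, ∑ l, c k * c l * |⟪w, p k - p l⟫| < 0 := by
    refine integral_neg_of_ae_neg ?_ (integrable_finsetSum _ fun k _ =>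
      integrable_finsetSum _ fun l _ => hint k l) (ae_restrict_of_ae ?_)
    · rw [Ne, Measure.restrict_eq_zero]
      exact (measure_ball_pos volume 0 one_pos).ne'
    · filter_upwards [ae_injective_inner hp] with w hw
      simpa only [inner_sub_right] using sum_mul_abs_sub_neg hw hc hc0
  have hκ := integral_abs_inner_unitBall_pos hv
  refine neg_of_mul_neg_right (havg ▸ ?_) hκ.le
  exact mul_neg_of_pos_of_neg (norm_pos_iff.mpr hv) hneg

end UnitBall

namespace Matrix

variable {ι : Type*}

lemma isSymm_of_norm_sub {E : Type*} [SeminormedAddCommGroup E] (p : ι → E) :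
    (of fun i j => ‖p i - p j‖).IsSymm :=
  ext fun i j => norm_sub_rev (p j) (p i)

variable [Fintype ι]

def CondNegDef (M : Matrix ι ι ℝ) : Prop :=
  ∀ c : ι → ℝ, ∑ i, c i = 0 → c ≠ 0 → c ⬝ᵥ (M *ᵥ c) < 0

lemma condNegDef_of_norm_sub {E : Type*} [NormedAddCommGroup E] [InnerProductSpace ℝ E]
    [FiniteDimensional ℝ E] {p : ι → E} (hp : Function.Injective p) :
    (of fun i j => ‖p i - p j‖).CondNegDef := fun c hc hc0 => by
  convert sum_mul_norm_sub_neg hp hc hc0 using 1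
  simp only [dotProduct, mulVec, of_apply, Finset.mul_sum]
  exact Finset.sum_congr rfl fun i _ => Finset.sum_congr rfl fun j _ => by ring

variable [DecidableEq ι]

noncomputable def centering (ι : Type*) [Fintype ι] [DecidableEq ι] : Matrix ι ι ℝ :=
  1 - (Fintype.card ι : ℝ)⁻¹ • vecMulVec 1 1

lemma centering_transpose : (centering ι)ᵀ = centering ι := by
  rw [centering, transpose_sub, transpose_one, transpose_smul, transpose_vecMulVec]

lemma centering_mul_of_one_vecMul_eq_zero {Z : Matrix ι ι ℝ} (hZ : 1 ᵥ* Z = 0) :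
    centering ι * Z = Z := by
  rw [centering, sub_mul, one_mul, smul_mul, vecMulVec_mul, hZ, vecMulVec_zero, smul_zero,
    sub_zero]

lemma mul_centering_of_mulVec_one_eq_zero {Z : Matrix ι ι ℝ} (hZ : Z *ᵥ 1 = 0) :
    Z * centering ι = Z := by
  rw [centering, mul_sub, mul_one, Matrix.mul_smul, mul_vecMulVec, hZ, zero_vecMulVec, smul_zero,
    sub_zero]

lemma centering_mulVec (v : ι → ℝ) :
    centering ι *ᵥ v = v - ((Fintype.card ι : ℝ)⁻¹ * ∑ i, v i) • 1 := by
  rw [centering, sub_mulVec, one_mulVec, smul_mulVec, vecMulVec_mulVec, one_dotProduct,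
    op_smul_eq_smul, smul_smul]

lemma sum_centering_mulVec (v : ι → ℝ) : ∑ i, (centering ι *ᵥ v) i = 0 := by
  rcases isEmpty_or_nonempty ι with hι | hι
  · simp
  simp [centering_mulVec, Finset.sum_sub_distrib]

lemma centering_mulVec_of_sum_eq_zero {v : ι → ℝ} (hv : ∑ i, v i = 0) :
    centering ι *ᵥ v = v := by
  simp [centering_mulVec, hv]

lemma posDef_vecMulVec_sub_centering_mul_mul {A : Matrix ι ι ℝ} (hA : A.IsSymm)
    (hA' : A.CondNegDef) : (vecMulVec 1 1 - centering ι * A * centering ι).PosDef := by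
  refine PosDef.of_dotProduct_mulVec_pos ?_ fun x hx => ?_
  · rw [isHermitian_iff_isSymm, IsSymm, transpose_sub, transpose_vecMulVec, transpose_mul,
      transpose_mul, centering_transpose, hA.eq, mul_assoc]
  have hquad : star x ⬝ᵥ ((vecMulVec 1 1 - centering ι * A * centering ι) *ᵥ x)
      = (∑ i, x i) ^ 2 - centering ι *ᵥ x ⬝ᵥ (A *ᵥ (centering ι *ᵥ x)) := by
    rw [star_trivial, sub_mulVec, dotProduct_sub, ← mulVec_mulVec, ← mulVec_mulVec,
      dotProduct_mulVec x (centering ι), ← mulVec_transpose, centering_transpose,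
      vecMulVec_mulVec, one_dotProduct, op_smul_eq_smul, dotProduct_smul, dotProduct_one,
      smul_eq_mul, sq]
  rw [hquad]
  have hcnd := hA' _ (sum_centering_mulVec x)
  by_cases hx1 : ∑ i, x i = 0
  · rw [centering_mulVec_of_sum_eq_zero hx1] at hcnd ⊢
    rw [hx1]
    linarith [hcnd hx]
  · by_cases h0 : centering ι *ᵥ x = 0
    · simp [h0, hx1, sq_pos_of_ne_zero]
    · linarith [hcnd h0, sq_pos_of_ne_zero hx1]

lemma trace_mul_transpose_mul_mul_pos_s3 {A B Z : Matrix ι ι ℝ} (hA : A.IsSymm)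
    (hA' : A.CondNegDef) (hB : B.IsSymm) (hB' : B.CondNegDef) (hZ₁ : Z *ᵥ 1 = 0)
    (hZ₂ : 1 ᵥ* Z = 0) (hZ : Z ≠ 0) : 0 < (B * Zᵀ * A * Z).trace := by
  set P := centering ι
  set G := vecMulVec 1 1 - P * A * P
  set H := vecMulVec 1 1 - P * B * P
  have hZt₁ : Zᵀ *ᵥ 1 = 0 := by rw [mulVec_transpose, hZ₂]
  have hZt₂ : 1 ᵥ* Zᵀ = 0 := by rw [vecMul_transpose, hZ₁]
  have hGZ : G * Z = -(P * A * Z) := by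
    rw [sub_mul, vecMulVec_mul, hZ₂, vecMulVec_zero, zero_sub, mul_assoc _ P,
      centering_mul_of_one_vecMul_eq_zero hZ₂]
  have hHZt : H * Zᵀ = -(P * B * Zᵀ) := by
    rw [sub_mul, vecMulVec_mul, hZt₂, vecMulVec_zero, zero_sub, mul_assoc _ P,
      centering_mul_of_one_vecMul_eq_zero hZt₂]
  have hcentered : (H * Zᵀ * G * Z).trace = (B * Zᵀ * A * Z).trace := by
    have h : H * Zᵀ * G * Z = P * (B * Zᵀ * A * Z) := by
      calc H * Zᵀ * G * Z = P * B * (Zᵀ * P) * A * Z := by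
            rw [mul_assoc _ G, hGZ, hHZt, neg_mul_neg]
            simp only [mul_assoc]
        _ = P * (B * Zᵀ * A * Z) := by
            rw [mul_centering_of_mulVec_one_eq_zero hZt₁]
            simp only [mul_assoc]
    rw [h, trace_mul_comm, mul_assoc _ Z, mul_centering_of_mulVec_one_eq_zero hZ₁]
  have hH : Hᵀ = H := by
    rw [transpose_sub, transpose_vecMulVec, transpose_mul, transpose_mul, centering_transpose,
      hB.eq, ← mul_assoc]
  have hkron : vec Z ⬝ᵥ ((H ⊗ₖ G) *ᵥ vec Z) = (H * Zᵀ * G * Z).trace := by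
    rw [kronecker_mulVec_vec, vec_dotProduct_vec, hH, trace_mul_comm Zᵀ, mul_assoc (H * Zᵀ),
      trace_mul_comm (H * Zᵀ)]
    simp only [mul_assoc]
  have hpos := ((posDef_vecMulVec_sub_centering_mul_mul hB hB').kronecker
    (posDef_vecMulVec_sub_centering_mul_mul hA hA')).dotProduct_mulVec_pos
    (vec_eq_zero_iff.not.mpr hZ)
  rwa [star_trivial, hkron, hcentered] at hpos

lemma trace_mul_transpose_mul_mul_combination (A B X Y : Matrix ι ι ℝ) {a b : ℝ}
    (hab : a + b = 1) :
    a * (B * Xᵀ * A * X).trace + b * (B * Yᵀ * A * Y).trace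
        - (B * (a • X + b • Y)ᵀ * A * (a • X + b • Y)).trace
      = a * b * (B * (X - Y)ᵀ * A * (X - Y)).trace := by
  obtain rfl : b = 1 - a := by linarith
  simp only [transpose_add, transpose_sub, transpose_smul, mul_add, add_mul, mul_sub, sub_mul,
    Matrix.mul_smul, Matrix.smul_mul, trace_add, trace_sub, trace_smul, smul_eq_mul]
  ring

theorem strictConcaveOn_neg_trace_mul_transpose_mul_mul {A B : Matrix ι ι ℝ} (hA : A.IsSymm)
    (hA' : A.CondNegDef) (hB : B.IsSymm) (hB' : B.CondNegDef) :
    StrictConcaveOn ℝ (doublyStochastic ℝ ι) fun X => -(B * Xᵀ * A * X).trace := by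
  refine ⟨convex_doublyStochastic, fun X hX Y hY hXY a b ha hb hab => ?_⟩
  have hpos := trace_mul_transpose_mul_mul_pos_s3 hA hA' hB hB' (Z := X - Y)
    (by rw [sub_mulVec, mulVec_one_of_mem_doublyStochastic hX,
      mulVec_one_of_mem_doublyStochastic hY, sub_self])
    (by rw [vecMul_sub, one_vecMul_of_mem_doublyStochastic hX,
      one_vecMul_of_mem_doublyStochastic hY, sub_self])
    (sub_ne_zero.mpr hXY)
  have hcomb := trace_mul_transpose_mul_mul_combination A B X Y hab
  simp only [smul_eq_mul]
  nlinarith [mul_pos (mul_pos ha hb) hpos]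

end Matrix

/-- For Euclidean distance matrices `A i j = ‖x i - x j‖₂`, `B i j = ‖y i - y j‖₂` built from
pairwise distinct points, the set of global minimizers of `E₂(X) = -tr (B Xᵀ A X)` over the
doubly stochastic matrices equals the set of global minimizers of `E₂` over the permutation
matrices; in particular the minimal values agree and every global minimizer over `DS` is a
permutation matrix. -/
theorem euclidean_gm_solution_sets_coincide
    {d s n : ℕ}
    (x : Fin n → EuclideanSpace ℝ (Fin d)) (hx : Function.Injective x)
    (y : Fin n → EuclideanSpace ℝ (Fin s)) (hy : Function.Injective y)
    (A B : Matrix (Fin n) (Fin n) ℝ)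
    (hA : ∀ i j, A i j = ‖x i - x j‖) (hB : ∀ i j, B i j = ‖y i - y j‖)
    (E : Matrix (Fin n) (Fin n) ℝ → ℝ)
    (hE : ∀ X, E X = -(B * Xᵀ * A * X).trace)
    (DS : Set (Matrix (Fin n) (Fin n) ℝ))
    (hDS : DS = {X | X *ᵥ (fun _ => 1) = (fun _ => 1) ∧ Xᵀ *ᵥ (fun _ => 1) = (fun _ => 1) ∧
      ∀ i j, 0 ≤ X i j})
    (Perm : Set (Matrix (Fin n) (Fin n) ℝ))
    (hPerm : Perm = {X | ∃ σ : Equiv.Perm (Fin n), X = σ.permMatrix ℝ}) :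
    {X ∈ DS | ∀ Y ∈ DS, E X ≤ E Y} = {X ∈ Perm | ∀ Y ∈ Perm, E X ≤ E Y} ∧
      sInf (E '' DS) = sInf (E '' Perm) ∧
      (∀ X ∈ DS, (∀ Y ∈ DS, E X ≤ E Y) → X ∈ Perm) := by
  have hDS' : DS = doublyStochastic ℝ (Fin n) := by
    rw [hDS]
    ext X
    simp only [Set.mem_ofPred_eq, SetLike.mem_coe, mem_doublyStochastic, mulVec_transpose]
    tauto
  have hPerm' : Perm = {σ.permMatrix ℝ | σ : Equiv.Perm (Fin n)} := by
    rw [hPerm]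
    exact Set.ext fun X => exists_congr fun σ => eq_comm
  have hf : StrictConcaveOn ℝ DS E := by
    obtain rfl : A = of fun i j => ‖x i - x j‖ := ext hA
    obtain rfl : B = of fun i j => ‖y i - y j‖ := ext hB
    rw [hDS', funext hE]
    exact strictConcaveOn_neg_trace_mul_transpose_mul_mul (isSymm_of_norm_sub x)
      (condNegDef_of_norm_sub hx) (isSymm_of_norm_sub y) (condNegDef_of_norm_sub hy)
  rw [hDS', doublyStochastic_eq_convexHull_permMatrix, ← hPerm'] at hf ⊢
  refine ⟨by simpa only [isMinOn_iff] using hf.setOf_isMinOn_convexHull,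
    hf.concaveOn.sInf_image_convexHull (hPerm' ▸ Set.finite_range _) (hPerm' ▸ ⟨_, 1, rfl⟩),
    fun X hX hmin => hf.mem_of_isMinOn_convexHull hX (isMinOn_iff.mpr hmin)⟩
end

section
/- Let M ∈ ℝ^{m×m} be symmetric. Let F be a random m×d matrix with i.i.d. standard normal N(0,1) entries, and let X be a random vector in ℝ^m with i.i.d. N(0,1) coordinates. Then P(FᵀMF is positive semidefinite) ≤ (P(XᵀMX ≥ 0))^d. -/
open Matrix MeasureTheory ProbabilityTheory

private lemma uncurry_measurable' {m d : ℕ} :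
    Measurable (fun (g : Fin d → Fin m → ℝ) (p : Fin m × Fin d) => g p.2 p.1) :=
  measurable_pi_lambda _ fun p => (measurable_pi_apply p.1).comp (measurable_pi_apply p.2)

private lemma map_uncurry' {m d : ℕ} :
    (Measure.pi fun _ : Fin d => (Measure.pi fun _ : Fin m => gaussianReal 0 1)).map
        (fun (g : Fin d → Fin m → ℝ) (p : Fin m × Fin d) => g p.2 p.1)
      = Measure.pi fun _ : Fin m × Fin d => gaussianReal 0 1 := by
  refine (Measure.pi_eq fun s hs => ?_).symm
  rw [Measure.map_apply uncurry_measurable' (MeasurableSet.univ_pi hs)]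
  have hpre : (fun (g : Fin d → Fin m → ℝ) (p : Fin m × Fin d) => g p.2 p.1) ⁻¹'
      (Set.pi Set.univ s) = Set.pi Set.univ fun j => Set.pi Set.univ fun i => s (i, j) := by
    ext g
    simp only [Set.mem_preimage, Set.mem_pi, Set.mem_univ, true_implies, Prod.forall]
    exact ⟨fun h j i => h i j, fun h i j => h j i⟩
  rw [hpre, Measure.pi_pi]
  simp_rw [Measure.pi_pi]
  rw [Finset.prod_comm]
  exact (Fintype.prod_prod_type (f := fun p : Fin m × Fin d => (gaussianReal 0 1) (s p))).symm

private lemma diag_entry_eq' {m d : ℕ} (M : Matrix (Fin m) (Fin m) ℝ)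
    (F : Fin m × Fin d → ℝ) (j : Fin d) :
    Pi.single j 1 ⬝ᵥ ((Matrix.of fun i j => F (i, j))ᵀ * M * (Matrix.of fun i j => F (i, j))) *ᵥ
        Pi.single j 1
      = (fun i => F (i, j)) ⬝ᵥ M *ᵥ (fun i => F (i, j)) := by
  simp [Matrix.mul_apply, Matrix.mulVec, dotProduct, Pi.single_apply, Finset.sum_mul,
    Finset.mul_sum, mul_ite, ite_mul, mul_comm, mul_left_comm]
  rw [Finset.sum_comm]
  exact Finset.sum_congr rfl fun a _ => Finset.sum_congr rfl fun b _ => by ring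

/-- For a symmetric `M`, the probability that `Fᵀ M F` is positive semidefinite, for a random
`m × d` matrix `F` with i.i.d. standard normal entries, is at most the `d`-th power of the
probability that `Xᵀ M X ≥ 0` for a standard Gaussian vector `X` in `ℝ^m`. -/
theorem prob_posSemidef_le_pow
    {m d : ℕ} (M : Matrix (Fin m) (Fin m) ℝ) (hM : Mᵀ = M) :
    (Measure.pi fun _ : Fin m × Fin d => gaussianReal 0 1)
      {F : Fin m × Fin d → ℝ |
        ∀ u : Fin d → ℝ,
          0 ≤ u ⬝ᵥ ((Matrix.of fun i j => F (i, j))ᵀ * M * (Matrix.of fun i j => F (i, j))) *ᵥ u}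
      ≤ ((Measure.pi fun _ : Fin m => gaussianReal 0 1)
          {x : Fin m → ℝ | 0 ≤ x ⬝ᵥ M *ᵥ x}) ^ d := by
  set A : Set (Fin m → ℝ) := {x | 0 ≤ x ⬝ᵥ M *ᵥ x} with hA
  have hg : Measurable fun x : Fin m → ℝ => x ⬝ᵥ M *ᵥ x := by
    simp only [dotProduct, Matrix.mulVec]
    exact Finset.measurable_sum _ fun i _ => (measurable_pi_apply i).mul
      (Finset.measurable_sum _ fun k _ => measurable_const.mul (measurable_pi_apply k))
  have hAmeas : MeasurableSet A := measurableSet_le measurable_const hg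
  set S : Set (Fin m × Fin d → ℝ) :=
    ⋂ j : Fin d, (fun (F : Fin m × Fin d → ℝ) (i : Fin m) => F (i, j)) ⁻¹' A with hS
  have hcol : ∀ j : Fin d, Measurable fun (F : Fin m × Fin d → ℝ) (i : Fin m) => F (i, j) :=
    fun j => measurable_pi_lambda _ fun i => measurable_pi_apply (i, j)
  have hSmeas : MeasurableSet S := MeasurableSet.iInter fun j => hAmeas.preimage (hcol j)
  have hsub : {F : Fin m × Fin d → ℝ |
      ∀ u : Fin d → ℝ,
        0 ≤ u ⬝ᵥ ((Matrix.of fun i j => F (i, j))ᵀ * M * (Matrix.of fun i j => F (i, j))) *ᵥ u}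
      ⊆ S := by
    intro F hF
    refine Set.mem_iInter.2 fun j => ?_
    have := hF (Pi.single j 1)
    rw [diag_entry_eq' M F j] at this
    exact this
  refine le_trans (measure_mono hsub) ?_
  rw [← map_uncurry', Measure.map_apply uncurry_measurable' hSmeas]
  have hpre : (fun (g : Fin d → Fin m → ℝ) (p : Fin m × Fin d) => g p.2 p.1) ⁻¹' S
      = Set.pi Set.univ fun _ : Fin d => A := by
    ext g
    simp [hS, Set.mem_pi]
  rw [hpre, Measure.pi_pi, Finset.prod_const, Finset.card_univ, Fintype.card_fin]
end

section
/- For all real numbers a, b with 0 < a ≤ b and every p ∈ (0, 1/2), the quantity η = ( a^{1−p} b^p / ((a+b)/2) ) · ( (1/2)(1−p)^{p−1} p^{−p} ) satisfies 0 < η < 1. -/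
/-- For `0 < a ≤ b` and `p ∈ (0, 1/2)`, the quantity
`η = (a^(1-p) b^p / ((a+b)/2)) · ((1/2)(1-p)^(p-1) p^(-p))` satisfies `0 < η < 1`. -/
theorem eta_mem_Ioo (a b p : ℝ) (ha : 0 < a) (hab : a ≤ b)
    (hp : p ∈ Set.Ioo (0 : ℝ) (1 / 2)) :
    0 < a ^ (1 - p) * b ^ p / ((a + b) / 2) * (1 / 2 * (1 - p) ^ (p - 1) * p ^ (-p)) ∧
      a ^ (1 - p) * b ^ p / ((a + b) / 2) * (1 / 2 * (1 - p) ^ (p - 1) * p ^ (-p)) < 1 := by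
  obtain ⟨hp0, hp2⟩ := hp
  have h1p : 0 < 1 - p := by linarith
  have hb : 0 < b := lt_of_lt_of_le ha hab
  set x := a / (1 - p) with hx
  set y := b / p with hy
  have hx0 : 0 < x := div_pos ha h1p
  have hy0 : 0 < y := div_pos hb hp0
  have hxy : x ≠ y := by
    intro h
    rw [hx, hy, div_eq_div_iff (ne_of_gt h1p) (ne_of_gt hp0)] at h
    nlinarith
  have hmem : (1 - p) • Real.log x + p • Real.log y < Real.log ((1 - p) • x + p • y) :=
    strictConcaveOn_log_Ioi.2 (Set.mem_Ioi.mpr hx0) (Set.mem_Ioi.mpr hy0) hxy h1p hp0 (by ring)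
  have hsum : (1 - p) • x + p • y = a + b := by
    simp only [smul_eq_mul, hx, hy]
    field_simp
  rw [hsum] at hmem
  simp only [smul_eq_mul] at hmem
  have key : x ^ (1 - p) * y ^ p < a + b := by
    have h2 : x ^ (1 - p) * y ^ p =
        Real.exp ((1 - p) * Real.log x + p * Real.log y) := by
      rw [Real.exp_add, Real.rpow_def_of_pos hx0, Real.rpow_def_of_pos hy0]
      ring_nf
    rw [h2]
    calc Real.exp ((1 - p) * Real.log x + p * Real.log y)
        < Real.exp (Real.log (a + b)) := Real.exp_lt_exp.2 hmem
      _ = a + b := Real.exp_log (by linarith)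
  have hab2 : a ^ (1 - p) * b ^ p = (1 - p) ^ (1 - p) * p ^ p * (x ^ (1 - p) * y ^ p) := by
    have hax : a = (1 - p) * x := by rw [hx]; field_simp
    have hby : b = p * y := by rw [hy]; field_simp
    rw [hax, hby, Real.mul_rpow h1p.le hx0.le, Real.mul_rpow hp0.le hy0.le]
    ring
  have e1 : (1 - p : ℝ) ^ (1 - p) * (1 - p) ^ (p - 1) = 1 := by
    rw [← Real.rpow_add h1p]; norm_num
  have e2 : (p : ℝ) ^ p * p ^ (-p) = 1 := by
    rw [← Real.rpow_add hp0]; simp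
  have heta : a ^ (1 - p) * b ^ p / ((a + b) / 2) * (1 / 2 * (1 - p) ^ (p - 1) * p ^ (-p))
      = x ^ (1 - p) * y ^ p * ((1 - p) ^ (1 - p) * (1 - p) ^ (p - 1)) * (p ^ p * p ^ (-p))
        / (a + b) := by
    have hinv : ((a + b) / 2)⁻¹ = 2 * (a + b)⁻¹ := by
      rw [inv_div, div_eq_mul_inv]
    rw [hab2, div_eq_mul_inv, hinv]; ring
  rw [heta, e1, e2, mul_one, mul_one]
  constructor
  · positivity
  · rw [div_lt_one (by linarith)]
    exact key
end

section
/- Let M ∈ ℝ^{n²×n²} be a symmetric matrix and c ∈ ℝ^{n²}, and define E(X) = [X]ᵀ M [X] + cᵀ[X] for X ∈ ℝ^{n×n}. Assume that vᵀMv < 0 for every nonzero v of the form v = [V] with V𝟙 = 0 and Vᵀ𝟙 = 0 (i.e., E is conditionally concave). Then every local minimum of E over the doubly stochastic matrices DS is a permutation matrix; in particular, min_{X∈DS} E(X) = min_{X∈Π_n} E(X) and every global minimizer of E over DS lies in Π_n. -/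
/-!
Any two doubly stochastic matrices differ by a matrix with zero row and column sums, so
conditional concavity makes `E` strictly concave on `DS`. A local minimum of a strictly concave
function on a convex set is an extreme point: if it lay strictly between two points of the set, it
would also lie strictly between two points arbitrarily close to it, where the function is at least
its value, contradicting strict concavity. By Birkhoff's theorem the extreme points of `DS` are the
permutation matrices, and since `DS` is compact, `E` attains its minimum over `DS` at one of them.
-/

open Matrix

/-- The column stack (vectorization) of `X ∈ ℝ^{n×n}`: `[X] (j, i) = X i j`. -/
def colStack {n : ℕ} (X : Matrix (Fin n) (Fin n) ℝ) : Fin n × Fin n → ℝ :=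
  fun p => X p.2 p.1

open Filter Set Topology

theorem IsLocalMinOn.mem_extremePoints_of_strictConcaveOn {E : Type*} [AddCommGroup E]
    [Module ℝ E] [TopologicalSpace E] [ContinuousAdd E] [ContinuousSMul ℝ E]
    {f : E → ℝ} {s : Set E} {x : E} (hmin : IsLocalMinOn f s x) (hf : StrictConcaveOn ℝ s f)
    (hx : x ∈ s) : x ∈ s.extremePoints ℝ := by
  refine mem_extremePoints_iff_left.2 ⟨hx, fun y hy z hz hxyz => ?_⟩
  by_contra hyx
  have hyz : y ≠ z := by
    rintro rfl
    have : x = y := by simpa [openSegment_same] using hxyz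
    exact hyx this.symm
  have near : ∀ w ∈ s, ∀ᶠ t in 𝓝[>] (0 : ℝ),
      x + t • (w - x) ∈ s ∧ f x ≤ f (x + t • (w - x)) := by
    intro w hw
    have hmem : ∀ᶠ t in 𝓝[>] (0 : ℝ), x + t • (w - x) ∈ s := by
      filter_upwards [Ioo_mem_nhdsGT one_pos] with t ht
      exact hf.1.add_smul_sub_mem hx hw ⟨ht.1.le, ht.2.le⟩
    have hlim : Tendsto (fun t : ℝ => x + t • (w - x)) (𝓝[>] 0) (𝓝[s] x) := by
      refine tendsto_nhdsWithin_iff.2 ⟨?_, hmem⟩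
      exact (Continuous.tendsto' (by fun_prop) 0 x (by simp)).mono_left nhdsWithin_le_nhds
    exact hmem.and (hlim.eventually hmin)
  obtain ⟨t, ⟨⟨hyt, hfy⟩, hzt, hfz⟩, ht⟩ :=
    ((near y hy).and (near z hz)).and self_mem_nhdsWithin |>.exists
  obtain ⟨a, b, ha, hb, hab, rfl⟩ := hxyz
  set x := a • y + b • z
  have hne : x + t • (y - x) ≠ x + t • (z - x) := by
    simpa [sub_left_inj, smul_right_inj ht.ne'] using hyz
  -- Pulling `y` and `z` towards `x` by the same factor keeps `x` at the same position in between.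
  have hcomb : a • (x + t • (y - x)) + b • (x + t • (z - x)) = x := by
    obtain rfl : b = 1 - a := eq_sub_of_add_eq' hab
    simp only [x]
    module
  have hlt := hf.2 hyt hzt hne ha hb hab
  rw [hcomb, smul_eq_mul, smul_eq_mul] at hlt
  have hsplit : a * f x + b * f x = f x := by rw [← add_mul, hab, one_mul]
  linarith [mul_le_mul_of_nonneg_left hfy ha.le, mul_le_mul_of_nonneg_left hfz hb.le]

theorem Matrix.dotProduct_mulVec_smul_add_smul {ι R : Type*} [Fintype ι] [CommRing R]
    (M : Matrix ι ι R) (v w : ι → R) {a b : R} (hab : a + b = 1) :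
    (a • v + b • w) ⬝ᵥ M *ᵥ (a • v + b • w) =
      a * (v ⬝ᵥ M *ᵥ v) + b * (w ⬝ᵥ M *ᵥ w) - a * b * ((v - w) ⬝ᵥ M *ᵥ (v - w)) := by
  obtain rfl : b = 1 - a := eq_sub_of_add_eq' hab
  simp only [mulVec_add, mulVec_sub, mulVec_smul, dotProduct_add, dotProduct_sub, add_dotProduct,
    sub_dotProduct, dotProduct_smul, smul_dotProduct, smul_eq_mul]
  ring

theorem doublyStochastic_eq_setOf {R n : Type*} [Fintype n] [DecidableEq n] [CommSemiring R]
    [PartialOrder R] [IsOrderedRing R] :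
    (doublyStochastic R n : Set (Matrix n n R)) =
      {X | X *ᵥ 1 = 1 ∧ Xᵀ *ᵥ 1 = 1 ∧ ∀ i j, 0 ≤ X i j} := by
  ext X
  simp only [SetLike.mem_coe, mem_doublyStochastic, mulVec_transpose, mem_ofPred_eq]
  tauto

theorem isCompact_doublyStochastic {n : Type*} [Fintype n] [DecidableEq n] :
    IsCompact (doublyStochastic ℝ n : Set (Matrix n n ℝ)) := by
  rw [doublyStochastic_eq_convexHull_permMatrix]
  exact (finite_range fun σ : Equiv.Perm n => σ.permMatrix ℝ).isCompact_convexHull (𝕜 := ℝ)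

@[fun_prop]
theorem continuous_colStack {n : ℕ} : Continuous (colStack (n := n)) := by
  unfold colStack; fun_prop

def ConditionallyConcave {n : ℕ} (M : Matrix (Fin n × Fin n) (Fin n × Fin n) ℝ) : Prop :=
  ∀ V : Matrix (Fin n) (Fin n) ℝ, V ≠ 0 → V *ᵥ 1 = 0 → Vᵀ *ᵥ 1 = 0 →
    colStack V ⬝ᵥ M *ᵥ colStack V < 0

theorem ConditionallyConcave.strictConcaveOn_doublyStochastic {n : ℕ}
    {M : Matrix (Fin n × Fin n) (Fin n × Fin n) ℝ} (hM : ConditionallyConcave M)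
    {c : Fin n × Fin n → ℝ} {E : Matrix (Fin n) (Fin n) ℝ → ℝ}
    (hE : ∀ X, E X = colStack X ⬝ᵥ M *ᵥ colStack X + c ⬝ᵥ colStack X) :
    StrictConcaveOn ℝ (doublyStochastic ℝ (Fin n)) E := by
  refine ⟨convex_doublyStochastic, fun X hX Y hY hXY a b ha hb hab => ?_⟩
  have hrow : (X - Y) *ᵥ 1 = 0 := by
    rw [sub_mulVec, mulVec_one_of_mem_doublyStochastic hX, mulVec_one_of_mem_doublyStochastic hY,
      sub_self]
  have hcol : (X - Y)ᵀ *ᵥ 1 = 0 := by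
    rw [mulVec_transpose, vecMul_sub, one_vecMul_of_mem_doublyStochastic hX,
      one_vecMul_of_mem_doublyStochastic hY, sub_self]
  have hneg : (colStack X - colStack Y) ⬝ᵥ M *ᵥ (colStack X - colStack Y) < 0 :=
    hM (X - Y) (sub_ne_zero.2 hXY) hrow hcol
  have hcs : colStack (a • X + b • Y) = a • colStack X + b • colStack Y := rfl
  simp only [hE, hcs, dotProduct_mulVec_smul_add_smul _ _ _ hab, dotProduct_add, dotProduct_smul,
    smul_eq_mul]
  linarith [mul_neg_of_pos_of_neg (mul_pos ha hb) hneg]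

theorem IsCompact.sInf_image_eq_of_isMinOn_mem {α : Type*} [TopologicalSpace α] {f : α → ℝ}
    {s t : Set α} (hs : IsCompact s) (hne : s.Nonempty) (hf : ContinuousOn f s) (hts : t ⊆ s)
    (hmin : ∀ x ∈ s, IsMinOn f s x → x ∈ t) : sInf (f '' s) = sInf (f '' t) := by
  obtain ⟨x, hxs, hx⟩ := hs.exists_isMinOn hne hf
  have hleast : ∀ u ⊆ s, x ∈ u → IsLeast (f '' u) (f x) := fun u hus hxu =>
    ⟨mem_image_of_mem f hxu, forall_mem_image.2 fun y hy => hx (hus hy)⟩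
  rw [(hleast s subset_rfl hxs).csInf_eq, (hleast t hts (hmin x hxs hx)).csInf_eq]

theorem conditionally_concave_local_minima_are_permutations_general
    {n : ℕ} (M : Matrix (Fin n × Fin n) (Fin n × Fin n) ℝ)
    (c : Fin n × Fin n → ℝ)
    (E : Matrix (Fin n) (Fin n) ℝ → ℝ)
    (hE : ∀ X, E X = colStack X ⬝ᵥ M *ᵥ colStack X + c ⬝ᵥ colStack X)
    (hconc : ∀ V : Matrix (Fin n) (Fin n) ℝ, V ≠ 0 →
      V *ᵥ (fun _ => 1) = 0 → Vᵀ *ᵥ (fun _ => 1) = 0 →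
      colStack V ⬝ᵥ M *ᵥ colStack V < 0)
    (DS : Set (Matrix (Fin n) (Fin n) ℝ))
    (hDS : DS = {X | X *ᵥ (fun _ => 1) = (fun _ => 1) ∧ Xᵀ *ᵥ (fun _ => 1) = (fun _ => 1) ∧
      ∀ i j, 0 ≤ X i j})
    (Perm : Set (Matrix (Fin n) (Fin n) ℝ))
    (hPerm : Perm = {X | ∃ σ : Equiv.Perm (Fin n), X = σ.permMatrix ℝ}) :
    (∀ X ∈ DS, IsLocalMinOn E DS X → X ∈ Perm) ∧
      sInf (E '' DS) = sInf (E '' Perm) ∧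
      (∀ X ∈ DS, (∀ Y ∈ DS, E X ≤ E Y) → X ∈ Perm) := by
  obtain rfl : DS = doublyStochastic ℝ (Fin n) := hDS.trans doublyStochastic_eq_setOf.symm
  have hPerm' : Perm = (doublyStochastic ℝ (Fin n) : Set _).extremePoints ℝ := by
    simp only [hPerm, extremePoints_doublyStochastic, eq_comm]
  have hM : ConditionallyConcave M := hconc
  have hlocal : ∀ X ∈ doublyStochastic ℝ (Fin n),
      IsLocalMinOn E (doublyStochastic ℝ (Fin n)) X → X ∈ Perm := fun X hX hmin =>
    hPerm' ▸ hmin.mem_extremePoints_of_strictConcaveOn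
      (hM.strictConcaveOn_doublyStochastic hE) hX
  have hEcont : Continuous E := by
    rw [funext hE]
    fun_prop
  refine ⟨hlocal, ?_, fun X hX hmin => hlocal X hX (isMinOn_iff.2 hmin).localize⟩
  exact isCompact_doublyStochastic.sInf_image_eq_of_isMinOn_mem ⟨1, one_mem _⟩
    hEcont.continuousOn (hPerm' ▸ extremePoints_subset) fun X hX hmin => hlocal X hX hmin.localize

/-- If `E(X) = [X]ᵀ M [X] + cᵀ [X]` is conditionally concave, i.e. `vᵀ M v < 0` for every
nonzero `v = [V]` with `V𝟙 = 0` and `Vᵀ𝟙 = 0`, then every local minimum of `E` over the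
doubly stochastic matrices is a permutation matrix; in particular the minimum of `E` over `DS`
equals its minimum over the permutation matrices and every global minimizer of `E` over `DS`
is a permutation matrix. -/
theorem conditionally_concave_local_minima_are_permutations
    {n : ℕ} (M : Matrix (Fin n × Fin n) (Fin n × Fin n) ℝ) (hM : Mᵀ = M)
    (c : Fin n × Fin n → ℝ)
    (E : Matrix (Fin n) (Fin n) ℝ → ℝ)
    (hE : ∀ X, E X = colStack X ⬝ᵥ M *ᵥ colStack X + c ⬝ᵥ colStack X)
    (hconc : ∀ V : Matrix (Fin n) (Fin n) ℝ, V ≠ 0 →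
      V *ᵥ (fun _ => 1) = 0 → Vᵀ *ᵥ (fun _ => 1) = 0 →
      colStack V ⬝ᵥ M *ᵥ colStack V < 0)
    (DS : Set (Matrix (Fin n) (Fin n) ℝ))
    (hDS : DS = {X | X *ᵥ (fun _ => 1) = (fun _ => 1) ∧ Xᵀ *ᵥ (fun _ => 1) = (fun _ => 1) ∧
      ∀ i j, 0 ≤ X i j})
    (Perm : Set (Matrix (Fin n) (Fin n) ℝ))
    (hPerm : Perm = {X | ∃ σ : Equiv.Perm (Fin n), X = σ.permMatrix ℝ}) :
    (∀ X ∈ DS, IsLocalMinOn E DS X → X ∈ Perm) ∧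
      sInf (E '' DS) = sInf (E '' Perm) ∧
      (∀ X ∈ DS, (∀ Y ∈ DS, E X ≤ E Y) → X ∈ Perm) :=
  conditionally_concave_local_minima_are_permutations_general M c E hE hconc DS hDS Perm hPerm
end

section
/- Let M ∈ ℝ^{m×m} be symmetric, c ∈ ℝ^m, and E(x) = xᵀMx + cᵀx. Let S ⊂ ℝ^m be a finite set and K = conv(S) its convex hull. If x* ∈ K is a local minimum of E on K and x* is not an extreme point of K, then there exist distinct extreme points y, z of K with (y − z)ᵀ M (y − z) ≥ 0. -/
/-!
A non-extreme point `x` of the polytope `K = conv S` is a convex combination of the extreme points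
of `K` (Krein–Milman) in which two distinct extreme points `y ≠ z` carry positive weight.
Shifting weight between `y` and `z` moves `x` along the line `x + t (y - z)` inside `K` for all
small `|t|`, so `t ↦ E (x + t (y - z))` has a local minimum at `0`. Since
`E (x + t d) + E (x - t d) = 2 E x + 2 t² dᵀ M d`, this forces `dᵀ M d ≥ 0` for `d = y - z`.
-/

open Matrix Filter Topology

theorem Set.Finite.convexHull_extremePoints_convexHull {E : Type*} [AddCommGroup E] [Module ℝ E]
    [TopologicalSpace E] [T2Space E] [IsTopologicalAddGroup E] [ContinuousSMul ℝ E]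
    [LocallyConvexSpace ℝ E] {s : Set E} (hs : s.Finite) :
    convexHull ℝ ((convexHull ℝ s).extremePoints ℝ) = convexHull ℝ s := by
  have hext : ((convexHull ℝ s).extremePoints ℝ).Finite :=
    hs.subset extremePoints_convexHull_subset
  rw [← (hext.isClosed_convexHull ℝ).closure_eq]
  exact closure_convexHull_extremePoints (hs.isCompact_convexHull ℝ) (convex_convexHull ℝ s)

section Weights

variable {R E : Type*} [Field R] [LinearOrder R] [IsStrictOrderedRing R] [AddCommGroup E]
  [Module R E] {s : Finset E} {w : E → R} {x y z : E}

theorem Finset.exists_ne_pos_weights_of_notMem (hw₀ : ∀ y ∈ s, 0 ≤ w y)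
    (hw₁ : ∑ y ∈ s, w y = 1) (hx : ∑ y ∈ s, w y • y = x) (hxs : x ∉ s) :
    ∃ y ∈ s, ∃ z ∈ s, y ≠ z ∧ 0 < w y ∧ 0 < w z := by
  obtain ⟨y, hy, hwy⟩ : ∃ y ∈ s, 0 < w y := by
    by_contra! h
    linarith [Finset.sum_nonpos h]
  by_contra! h
  have hzero : ∀ z ∈ s, z ≠ y → w z = 0 := fun z hz hzy ↦
    le_antisymm (h y hy z hz hzy.symm hwy) (hw₀ z hz)
  have hwy₁ : w y = 1 := by
    rwa [Finset.sum_eq_single_of_mem y hy hzero] at hw₁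
  have hxy : x = y := by
    rw [← hx, Finset.sum_eq_single_of_mem y hy fun z hz hzy ↦ by rw [hzero z hz hzy, zero_smul],
      hwy₁, one_smul]
  exact hxs (hxy ▸ hy)

theorem Finset.add_smul_sub_mem_convexHull (hw₀ : ∀ y ∈ s, 0 ≤ w y)
    (hw₁ : ∑ y ∈ s, w y = 1) (hx : ∑ y ∈ s, w y • y = x) (hy : y ∈ s) (hz : z ∈ s) (hyz : y ≠ z)
    {t : R} (hty : -w y ≤ t) (htz : t ≤ w z) :
    x + t • (y - z) ∈ convexHull R (s : Set E) := by
  classical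
  refine Finset.mem_convexHull'.2
    ⟨fun u ↦ w u + (if u = y then t else 0) - (if u = z then t else 0), ?_, ?_, ?_⟩
  · intro u hu
    have := hw₀ u hu
    dsimp only
    split_ifs with huy huz huz
    · exact absurd (huy.symm.trans huz) hyz
    · subst huy; linarith
    · subst huz; linarith
    · linarith
  · simp only [Finset.sum_sub_distrib, Finset.sum_add_distrib, Finset.sum_ite_eq', if_pos hy,
      if_pos hz, hw₁]
    ring
  · simp only [sub_smul, add_smul, ite_smul, zero_smul, Finset.sum_sub_distrib,
      Finset.sum_add_distrib, Finset.sum_ite_eq', if_pos hy, if_pos hz, hx, smul_sub]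
    abel

end Weights

theorem Set.Finite.exists_ne_eventually_add_smul_sub_mem_convexHull {E : Type*}
    [AddCommGroup E] [Module ℝ E] {s : Set E} (hs : s.Finite) {x : E}
    (hx : x ∈ convexHull ℝ s) (hxs : x ∉ s) :
    ∃ y ∈ s, ∃ z ∈ s, y ≠ z ∧ ∀ᶠ t in 𝓝 (0 : ℝ), x + t • (y - z) ∈ convexHull ℝ s := by
  lift s to Finset E using hs
  obtain ⟨w, hw₀, hw₁, hwx⟩ := Finset.mem_convexHull'.1 hx
  obtain ⟨y, hy, z, hz, hyz, hwy, hwz⟩ := s.exists_ne_pos_weights_of_notMem hw₀ hw₁ hwx hxs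
  refine ⟨y, hy, z, hz, hyz, ?_⟩
  filter_upwards [Icc_mem_nhds (neg_neg_of_pos hwy) hwz] with t ht
  exact s.add_smul_sub_mem_convexHull hw₀ hw₁ hwx hy hz hyz ht.1 ht.2

theorem IsLocalMinOn.isLocalMin_comp_add_smul {E β : Type*} [AddCommGroup E] [Module ℝ E]
    [TopologicalSpace E] [ContinuousAdd E] [ContinuousSMul ℝ E] [Preorder β] {f : E → β}
    {K : Set E} {x d : E} (hf : IsLocalMinOn f K x)
    (hK : ∀ᶠ t in 𝓝 (0 : ℝ), x + t • d ∈ K) :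
    IsLocalMin (fun t : ℝ ↦ f (x + t • d)) 0 := by
  have hline : Tendsto (fun t : ℝ ↦ x + t • d) (𝓝 0) (𝓝[K] x) := by
    refine tendsto_nhdsWithin_iff.2 ⟨?_, hK⟩
    exact (by fun_prop : Continuous fun t : ℝ ↦ x + t • d).tendsto' 0 x (by simp)
  exact IsMinFilter.comp_tendsto (by rwa [zero_smul, add_zero]) hline

section Quadratic

variable {n : Type*} [Fintype n] (M : Matrix n n ℝ) (c x d : n → ℝ)

theorem quadratic_add_smul_add_quadratic_sub_smul (t : ℝ) :
    ((x + t • d) ⬝ᵥ M *ᵥ (x + t • d) + c ⬝ᵥ (x + t • d)) +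
      ((x - t • d) ⬝ᵥ M *ᵥ (x - t • d) + c ⬝ᵥ (x - t • d)) =
      2 * (x ⬝ᵥ M *ᵥ x + c ⬝ᵥ x) + 2 * t ^ 2 * (d ⬝ᵥ M *ᵥ d) := by
  simp only [mulVec_add, mulVec_sub, mulVec_smul, dotProduct_add, add_dotProduct,
    dotProduct_sub, sub_dotProduct, dotProduct_smul, smul_dotProduct, smul_eq_mul]
  ring

theorem dotProduct_mulVec_nonneg_of_isLocalMin
    (h : IsLocalMin (fun t : ℝ ↦ (x + t • d) ⬝ᵥ M *ᵥ (x + t • d) + c ⬝ᵥ (x + t • d)) 0) :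
    0 ≤ d ⬝ᵥ M *ᵥ d := by
  set q := fun t : ℝ ↦ (x + t • d) ⬝ᵥ M *ᵥ (x + t • d) + c ⬝ᵥ (x + t • d)
  have hflip : ∀ᶠ t in 𝓝 (0 : ℝ), q 0 ≤ q (-t) :=
    (continuous_neg.tendsto' (0 : ℝ) 0 neg_zero).eventually h
  obtain ⟨t, ⟨hplus, hminus⟩, ht⟩ :=
    (((h.and hflip).filter_mono nhdsWithin_le_nhds).and self_mem_nhdsWithin).exists
      (f := 𝓝[≠] 0)
  have hsum := quadratic_add_smul_add_quadratic_sub_smul M c x d t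
  simp only [q, neg_smul, ← sub_eq_add_neg, zero_smul, add_zero] at hplus hminus
  have ht2 : 0 < t ^ 2 := sq_pos_of_ne_zero ht
  nlinarith

end Quadratic

theorem local_min_not_extreme_gives_nonneg_direction_general
    {m : ℕ} (M : Matrix (Fin m) (Fin m) ℝ) (c : Fin m → ℝ)
    (E : (Fin m → ℝ) → ℝ) (hE : ∀ x, E x = x ⬝ᵥ M *ᵥ x + c ⬝ᵥ x)
    (S : Finset (Fin m → ℝ))
    (K : Set (Fin m → ℝ)) (hK : K = convexHull ℝ (S : Set (Fin m → ℝ)))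
    (xstar : Fin m → ℝ) (hxK : xstar ∈ K)
    (hmin : IsLocalMinOn E K xstar)
    (hnotext : xstar ∉ Set.extremePoints ℝ K) :
    ∃ y ∈ Set.extremePoints ℝ K, ∃ z ∈ Set.extremePoints ℝ K,
      y ≠ z ∧ 0 ≤ (y - z) ⬝ᵥ M *ᵥ (y - z) := by
  obtain rfl : E = fun x ↦ x ⬝ᵥ M *ᵥ x + c ⬝ᵥ x := funext hE
  have hext : (K.extremePoints ℝ).Finite :=
    hK ▸ S.finite_toSet.subset extremePoints_convexHull_subset
  have hKext : convexHull ℝ (K.extremePoints ℝ) = K :=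
    hK ▸ S.finite_toSet.convexHull_extremePoints_convexHull
  obtain ⟨y, hy, z, hz, hyz, hline⟩ :=
    hext.exists_ne_eventually_add_smul_sub_mem_convexHull (by rwa [hKext]) hnotext
  refine ⟨y, hy, z, hz, hyz, dotProduct_mulVec_nonneg_of_isLocalMin M c xstar _ ?_⟩
  exact hmin.isLocalMin_comp_add_smul (hKext ▸ hline)

/-- Let `E(x) = xᵀ M x + cᵀ x` with `M` symmetric, and let `K = conv S` be the convex hull of a
finite set `S ⊂ ℝ^m`. If `x*` is a local minimum of `E` on `K` that is not an extreme point of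
`K`, then there exist distinct extreme points `y, z` of `K` with `(y - z)ᵀ M (y - z) ≥ 0`. -/
theorem local_min_not_extreme_gives_nonneg_direction
    {m : ℕ} (M : Matrix (Fin m) (Fin m) ℝ) (hM : Mᵀ = M) (c : Fin m → ℝ)
    (E : (Fin m → ℝ) → ℝ) (hE : ∀ x, E x = x ⬝ᵥ M *ᵥ x + c ⬝ᵥ x)
    (S : Finset (Fin m → ℝ))
    (K : Set (Fin m → ℝ)) (hK : K = convexHull ℝ (S : Set (Fin m → ℝ)))
    (xstar : Fin m → ℝ) (hxK : xstar ∈ K)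
    (hmin : IsLocalMinOn E K xstar)
    (hnotext : xstar ∉ Set.extremePoints ℝ K) :
    ∃ y ∈ Set.extremePoints ℝ K, ∃ z ∈ Set.extremePoints ℝ K,
      y ≠ z ∧ 0 ≤ (y - z) ⬝ᵥ M *ᵥ (y - z) :=
  local_min_not_extreme_gives_nonneg_direction_general M c E hE S K hK xstar hxK hmin hnotext
end
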